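/- arXiv:1810.02335 — 6 statements merged into one kernel-verified Lean document; each statement's English description precedes it below -/
import Mathlib

section
/- In any Boole-De Morgan algebra, the Boolean negation and the De Morgan negation commute: for all x, (x')‾ = (x̄)'. -/
/-- A Boole-De Morgan algebra: a Boolean algebra equipped with an additional
De Morgan negation `dm` satisfying `dm (dm x) = x` and `dm (x ⊔ y) = dm x ⊓ dm y`. -/
class BooleDeMorganAlgebra (α : Type*) extends BooleanAlgebra α where
  dm : α → α
  dm_dm : ∀ x : α, dm (dm x) = x
  dm_sup : ∀ x y : α, dm (x ⊔ y) = dm x ⊓ dm y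

open BooleDeMorganAlgebra

lemma bdm_dm_top {α : Type*} [BooleDeMorganAlgebra α] : dm (⊤ : α) = ⊥ := by
  have h : ∀ y : α, dm (⊤ : α) ≤ y := fun y => by
    have := dm_sup (dm y) (⊤ : α)
    simp [dm_dm] at this
    calc dm (⊤ : α) = dm (dm y ⊔ ⊤) := by rw [sup_top_eq]
    _ = y ⊓ dm ⊤ := by rw [dm_sup, dm_dm]
    _ ≤ y := inf_le_left
  exact le_bot_iff.mp (h ⊥)

lemma bdm_dm_bot {α : Type*} [BooleDeMorganAlgebra α] : dm (⊥ : α) = ⊤ := by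
  rw [← bdm_dm_top (α := α), dm_dm]

lemma bdm_dm_inf {α : Type*} [BooleDeMorganAlgebra α] (x y : α) :
    dm (x ⊓ y) = dm x ⊔ dm y := by
  conv_lhs => rw [← dm_dm x, ← dm_dm y, ← dm_sup, dm_dm]

/-- In any Boole-De Morgan algebra the Boolean negation `ᶜ` and the
De Morgan negation `dm` commute. -/
theorem bdm_negations_commute {α : Type*} [BooleDeMorganAlgebra α] (x : α) :
    dm (xᶜ) = (dm x)ᶜ := by
  have h1 : dm x ⊓ dm xᶜ = ⊥ := by rw [← dm_sup, sup_compl_eq_top, bdm_dm_top]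
  have h2 : dm x ⊔ dm xᶜ = ⊤ := by rw [← bdm_dm_inf, inf_compl_eq_bot, bdm_dm_bot]
  exact eq_compl_iff_isCompl.mpr (IsCompl.symm ⟨disjoint_iff.mpr h1, codisjoint_iff.mpr h2⟩)
end

section
/- Let B be a Boolean algebra with underlying lattice B_L. Then B_L × B_L^op, equipped with (x,y)' = (x', y') and (x,y)‾ = (y,x), is a Boole-De Morgan algebra, and the map x ↦ (x, x̄) (with x̄ := x' in B) is an embedding of Boole-De Morgan algebras when B is given the De Morgan negation equal to its Boolean negation. -/
open OrderDual

def Prod.dualSwap {α : Type*} (p : α × αᵒᵈ) : α × αᵒᵈ :=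
  (ofDual p.2, toDual p.1)

namespace Prod

variable {α : Type*}

theorem dualSwap_involutive : Function.Involutive (dualSwap (α := α)) :=
  fun _ => rfl

theorem dualSwap_sup [Max α] [Min α] (p q : α × αᵒᵈ) :
    dualSwap (p ⊔ q) = dualSwap p ⊓ dualSwap q :=
  rfl

end Prod

namespace BooleanAlgebra

variable {α : Type*} [BooleanAlgebra α]

variable (α) in
def toProdDual : BoundedLatticeHom α (α × αᵒᵈ) where
  toFun x := (x, toDual xᶜ)
  -- joins of `αᵒᵈ` are meets of `α`, so the second components obey De Morgan's laws
  map_sup' _ _ := Prod.ext rfl (congrArg toDual compl_sup)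
  map_inf' _ _ := Prod.ext rfl (congrArg toDual compl_inf)
  map_top' := Prod.ext rfl (congrArg toDual compl_top)
  map_bot' := Prod.ext rfl (congrArg toDual compl_bot)

theorem toProdDual_apply (x : α) : toProdDual α x = (x, toDual xᶜ) :=
  rfl

theorem toProdDual_injective : Function.Injective (toProdDual α) :=
  fun _ _ h => congrArg Prod.fst h

theorem dualSwap_toProdDual (x : α) : (toProdDual α x).dualSwap = toProdDual α xᶜ := by
  simp only [toProdDual_apply, Prod.dualSwap, ofDual_toDual, compl_compl]

end BooleanAlgebra

open BooleanAlgebra in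
/-- Let `B` be a Boolean algebra. Then `B_L × B_Lᵒᵈ` with `(x,y)' = (x', y')` and
`(x,y)‾ = (y,x)` is a Boole-De Morgan algebra (the map `c` is a complementation
on the product lattice and `dm` satisfies the De Morgan axioms), and `x ↦ (x, x')`
is an embedding of Boole-De Morgan algebras, where `B` carries the De Morgan
negation equal to its Boolean negation. -/
theorem booleanAlgebra_prod_orderDual_booleDeMorgan {B : Type*} [BooleanAlgebra B] :
    let c : B × Bᵒᵈ → B × Bᵒᵈ :=
      fun p => ((p.1)ᶜ, OrderDual.toDual ((OrderDual.ofDual p.2)ᶜ))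
    let dm : B × Bᵒᵈ → B × Bᵒᵈ := fun p => (OrderDual.ofDual p.2, OrderDual.toDual p.1)
    let i : B → B × Bᵒᵈ := fun x => (x, OrderDual.toDual xᶜ)
    (∀ p : B × Bᵒᵈ, p ⊓ c p = ⊥) ∧
      (∀ p : B × Bᵒᵈ, p ⊔ c p = ⊤) ∧
      (∀ p : B × Bᵒᵈ, dm (dm p) = p) ∧
      (∀ p q : B × Bᵒᵈ, dm (p ⊔ q) = dm p ⊓ dm q) ∧
      Function.Injective i ∧
      (∀ x y : B, i (x ⊔ y) = i x ⊔ i y) ∧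
      (∀ x y : B, i (x ⊓ y) = i x ⊓ i y) ∧
      i ⊥ = ⊥ ∧ i ⊤ = ⊤ ∧
      (∀ x : B, i (xᶜ) = c (i x)) ∧
      (∀ x : B, i (xᶜ) = dm (i x)) := by
  -- `c` is the complement of the product Boolean algebra, `dm` is `Prod.dualSwap`, `i` is `toProdDual B`.
  exact ⟨fun _ => inf_compl_eq_bot, fun _ => sup_compl_eq_top, Prod.dualSwap_involutive, Prod.dualSwap_sup,
    toProdDual_injective, map_sup (toProdDual B), map_inf (toProdDual B), map_bot (toProdDual B),
    map_top (toProdDual B), map_compl' (toProdDual B), fun x => (dualSwap_toProdDual x).symm⟩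
end

section
/- Every finitely generated Boole-De Morgan algebra is finite. -/
/-- Membership in the Boole-De Morgan subalgebra generated by a set `S`:
the smallest subset containing `S`, `⊥`, `⊤` and closed under join, meet,
Boolean complement and De Morgan negation. -/
inductive BDMGen {α : Type*} [BooleDeMorganAlgebra α] (S : Set α) : α → Prop
  | of {x : α} : x ∈ S → BDMGen S x
  | bot : BDMGen S ⊥
  | top : BDMGen S ⊤
  | sup {x y : α} : BDMGen S x → BDMGen S y → BDMGen S (x ⊔ y)
  | inf {x y : α} : BDMGen S x → BDMGen S y → BDMGen S (x ⊓ y)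
  | compl {x : α} : BDMGen S x → BDMGen S xᶜ
  | dm {x : α} : BDMGen S x → BDMGen S (BooleDeMorganAlgebra.dm x)

/-!
The De Morgan negation `dm` is an involutive lattice anti-automorphism, so it fixes `⊥`, `⊤`,
and, complements being unique, commutes with the Boolean complement. Hence the Boolean
subalgebra generated by `S ∪ dm '' S` is closed under `dm`, and so contains every element
generated by `S`. A Boolean subalgebra generated by a finite set `s` is finite: by De Morgan it
is the lattice generated by `{⊥} ∪ s` and their complements, and finitely generated lattices
are finite.
-/

namespace BooleanSubalgebra

variable {α : Type*} [BooleanAlgebra α]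

lemma closure_subset_latticeClosure (s : Set α) :
    (closure s : Set α) ⊆ latticeClosure (insert ⊥ s ∪ compl '' insert ⊥ s) := by
  set t := insert ⊥ s ∪ compl '' insert ⊥ s
  have compl_closed : compl '' latticeClosure t = latticeClosure t := by
    refine compl_image_latticeClosure_eq_of_compl_image_eq_self ?_
    rw [Set.image_union, Set.compl_compl_image, Set.union_comm]
  let L : BooleanSubalgebra α :=
    { carrier := latticeClosure t
      supClosed' := isSublattice_latticeClosure.supClosed
      infClosed' := isSublattice_latticeClosure.infClosed
      compl_mem' := fun hx ↦ compl_closed ▸ Set.mem_image_of_mem compl hx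
      bot_mem' := subset_latticeClosure (.inl (Set.mem_insert _ _)) }
  exact closure_le (L := L).2 fun x hx ↦ subset_latticeClosure (.inl (Set.mem_insert_of_mem _ hx))

lemma finite_closure {s : Set α} (hs : s.Finite) : (closure s : Set α).Finite :=
  ((hs.insert ⊥).union ((hs.insert ⊥).image compl)).latticeClosure.subset
    (closure_subset_latticeClosure s)

end BooleanSubalgebra

namespace BooleDeMorganAlgebra

variable {α : Type*} [BooleDeMorganAlgebra α]

lemma dm_inf (x y : α) : dm (x ⊓ y) = dm x ⊔ dm y := by
  rw [← dm_dm (dm x ⊔ dm y), dm_sup, dm_dm, dm_dm]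

lemma dm_top : dm (⊤ : α) = ⊥ :=
  calc dm (⊤ : α) = dm (dm ⊥ ⊔ ⊤) := by rw [sup_top_eq]
    _ = ⊥ := by rw [dm_sup, dm_dm, bot_inf_eq]

lemma dm_bot : dm (⊥ : α) = ⊤ := by
  rw [← dm_top, dm_dm]

lemma dm_compl (x : α) : dm xᶜ = (dm x)ᶜ := by
  refine (IsCompl.compl_eq ⟨?_, ?_⟩).symm
  · rw [disjoint_iff, ← dm_sup, sup_compl_eq_top, dm_top]
  · rw [codisjoint_iff, ← dm_inf, inf_compl_eq_bot, dm_bot]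

lemma dm_mem_closure {t : Set α} (ht : ∀ x ∈ t, dm x ∈ t) {x : α}
    (hx : x ∈ BooleanSubalgebra.closure t) : dm x ∈ BooleanSubalgebra.closure t := by
  induction hx using BooleanSubalgebra.closure_bot_sup_induction with
  | mem x hx => exact BooleanSubalgebra.subset_closure (ht x hx)
  | bot => rw [dm_bot]; exact BooleanSubalgebra.top_mem
  | sup x _ y _ hx hy => exact dm_sup x y ▸ BooleanSubalgebra.inf_mem hx hy
  | compl x _ hx => exact dm_compl x ▸ BooleanSubalgebra.compl_mem hx

lemma dm_mem_union_image_dm {s : Set α} {x : α} (hx : x ∈ s ∪ dm '' s) : dm x ∈ s ∪ dm '' s := by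
  rcases hx with hx | ⟨y, hy, rfl⟩
  · exact .inr (Set.mem_image_of_mem dm hx)
  · exact .inl ((dm_dm y).symm ▸ hy)

end BooleDeMorganAlgebra

lemma BDMGen.mem_closure_union_image_dm {α : Type*} [BooleDeMorganAlgebra α] {S : Set α}
    {x : α} (hx : BDMGen S x) :
    x ∈ BooleanSubalgebra.closure (S ∪ BooleDeMorganAlgebra.dm '' S) := by
  induction hx with
  | of h => exact BooleanSubalgebra.subset_closure (.inl h)
  | bot => exact BooleanSubalgebra.bot_mem
  | top => exact BooleanSubalgebra.top_mem
  | sup _ _ hx hy => exact BooleanSubalgebra.sup_mem hx hy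
  | inf _ _ hx hy => exact BooleanSubalgebra.inf_mem hx hy
  | compl _ hx => exact BooleanSubalgebra.compl_mem hx
  | dm _ hx =>
    exact BooleDeMorganAlgebra.dm_mem_closure
      (fun _ ↦ BooleDeMorganAlgebra.dm_mem_union_image_dm) hx

/-- Every finitely generated Boole-De Morgan algebra is finite: the subalgebra
generated by a finite set is finite. -/
theorem booleDeMorgan_locally_finite {α : Type*} [BooleDeMorganAlgebra α]
    (S : Set α) (hS : S.Finite) : {x : α | BDMGen S x}.Finite :=
  (BooleanSubalgebra.finite_closure (hS.union (hS.image BooleDeMorganAlgebra.dm))).subset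
    fun _ ↦ BDMGen.mem_closure_union_image_dm
end

section
/- Let A be a finite Boole-De Morgan algebra with atoms p₁, …, pₙ and associated involution σ (pᵢ* = p_{σ(i)}). If u is an element of a Boole-De Morgan extension of A and there exists an index i such that pᵢ · u·ū = pᵢ* · u·ū = pᵢ · u·u* = pᵢ* · u·u* = pᵢ · u'·ū = pᵢ* · u'·ū = 0, then pᵢ = 0, a contradiction since pᵢ is an atom. Equivalently: no atom pᵢ can satisfy all six of these equations for any u. -/
open BooleDeMorganAlgebra

lemma dm_antitone' {α : Type*} [BooleDeMorganAlgebra α] {x y : α} (h : x ≤ y) :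
    dm y ≤ dm x := by
  have : dm (x ⊔ y) = dm x ⊓ dm y := dm_sup x y
  rw [sup_eq_right.mpr h] at this
  rw [this]; exact inf_le_left


/-- Let `A` be a finite Boole-De Morgan algebra with atoms `p 1, …, p n` and
associated involution `σ` (so `(p i)* = p (σ i)`, where `x* = (x̄)'`), and let
`u` be an element of a Boole-De Morgan extension `B` of `A` (via an embedding
`f`). Then no atom `p i` can satisfy all six equations
`pᵢ·u·ū = pᵢ*·u·ū = pᵢ·u·u* = pᵢ*·u·u* = pᵢ·u'·ū = pᵢ*·u'·ū = 0`
(otherwise `pᵢ = 0`, contradicting that `pᵢ` is an atom). -/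
theorem no_atom_satisfies_six_equations {A B : Type*} [BooleDeMorganAlgebra A]
    [BooleDeMorganAlgebra B] [Fintype A]
    (f : A → B) (hinj : Function.Injective f)
    (hsup : ∀ x y : A, f (x ⊔ y) = f x ⊔ f y)
    (hinf : ∀ x y : A, f (x ⊓ y) = f x ⊓ f y)
    (hbot : f ⊥ = ⊥) (htop : f ⊤ = ⊤)
    (hcompl : ∀ x : A, f xᶜ = (f x)ᶜ)
    (hdm : ∀ x : A, f (dm x) = dm (f x))
    {n : ℕ} (p : Fin n → A)
    (hatom : ∀ i, IsAtom (p i))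
    (σ : Fin n → Fin n) (hσ2 : σ ∘ σ = id)
    (hσ : ∀ i, (dm (p i))ᶜ = p (σ i))
    (u : B) (i : Fin n) :
    ¬ (f (p i) ⊓ (u ⊓ dm u) = ⊥ ∧
       f (p (σ i)) ⊓ (u ⊓ dm u) = ⊥ ∧
       f (p i) ⊓ (u ⊓ (dm u)ᶜ) = ⊥ ∧
       f (p (σ i)) ⊓ (u ⊓ (dm u)ᶜ) = ⊥ ∧
       f (p i) ⊓ (uᶜ ⊓ dm u) = ⊥ ∧
       f (p (σ i)) ⊓ (uᶜ ⊓ dm u) = ⊥) := by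
  rintro ⟨h1, h2, h3, h4, h5, h6⟩
  set q := f (p i) with hq
  have hr : f (p (σ i)) = (dm q)ᶜ := by rw [← hσ i, hcompl, hdm]
  rw [hr] at h2 h4 h6
  -- q ⊓ u = ⊥
  have hqu : q ⊓ u = ⊥ := by
    have : q ⊓ u ⊓ (dm u ⊔ (dm u)ᶜ) = ⊥ := by
      rw [inf_sup_left, inf_assoc, inf_assoc, h1, h3, bot_sup_eq]
    simpa using this
  have hqdu : q ⊓ dm u = ⊥ := by
    have : q ⊓ dm u ⊓ (u ⊔ uᶜ) = ⊥ := by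
      rw [inf_sup_left]
      have e1 : q ⊓ dm u ⊓ u = ⊥ := by
        rw [show q ⊓ dm u ⊓ u = q ⊓ (u ⊓ dm u) by ac_rfl]; exact h1
      have e2 : q ⊓ dm u ⊓ uᶜ = ⊥ := by simpa [inf_assoc, inf_comm, inf_left_comm] using h5
      rw [e1, e2, bot_sup_eq]
    simpa using this
  have hru : (dm q)ᶜ ⊓ u = ⊥ := by
    have : (dm q)ᶜ ⊓ u ⊓ (dm u ⊔ (dm u)ᶜ) = ⊥ := by
      rw [inf_sup_left, inf_assoc, inf_assoc, h2, h4, bot_sup_eq]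
    simpa using this
  have hudq : u ≤ dm q := by
    have := disjoint_iff.mpr hru
    have h' : u ≤ ((dm q)ᶜ)ᶜ := (this.symm.le_compl_right)
    simpa using h'
  have hqdm : q ≤ dm u := by
    have := dm_antitone' hudq
    rwa [dm_dm] at this
  have hqbot : q = ⊥ := by
    have : q ≤ q ⊓ dm u := le_inf le_rfl hqdm
    rw [hqdu] at this
    exact le_bot_iff.mp this
  have : p i = ⊥ := hinj (by rw [← hq, hqbot, hbot])
  exact (hatom i).1 this
end

section
/- Let A be a finite Boole-De Morgan algebra with atoms p₁,…,pₙ and associated involution σ, and let u be an element of an extension of A. Define I₁ = {i : pᵢ·u·ū = 0}, I₂ = {i : pᵢ·u·u* = 0}, I₃ = {i : pᵢ·u'·ū = 0}. Then the triple (I₁, I₂, I₃) is σ-consistent, i.e. σ(I₂) = I₂, σ(I₃) = I₃, and (I₁∩I₂∩I₃) ∩ σ(I₁∩I₂∩I₃) = ∅. -/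
open BooleDeMorganAlgebra

section Aux
variable {α : Type*} [BooleDeMorganAlgebra α]

lemma dm_inf' (x y : α) : dm (x ⊓ y) = dm x ⊔ dm y := by
  have h := dm_sup (dm x) (dm y)
  rw [dm_dm, dm_dm] at h
  rw [← h, dm_dm]

lemma dm_le_dm' {x y : α} (h : x ≤ y) : dm y ≤ dm x := by
  have h2 : dm (x ⊔ y) = dm x ⊓ dm y := dm_sup x y
  rw [sup_eq_right.2 h] at h2
  rw [h2]; exact inf_le_left

lemma dm_top' : (dm ⊤ : α) = ⊥ := by
  have h := dm_sup (dm (⊥ : α)) ⊤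
  rw [sup_top_eq, dm_dm] at h
  rw [h, bot_inf_eq]

lemma dm_bot' : (dm ⊥ : α) = ⊤ := by
  have h := dm_sup (dm (⊤ : α)) ⊥
  rw [sup_bot_eq, dm_dm, top_inf_eq] at h
  exact h.symm

lemma dm_compl' (x : α) : dm xᶜ = (dm x)ᶜ := by
  have h1 : dm x ⊓ dm xᶜ = ⊥ := by
    rw [← dm_sup, sup_compl_eq_top, dm_top']
  have h2 : dm x ⊔ dm xᶜ = ⊤ := by
    rw [← dm_inf', inf_compl_eq_bot, dm_bot']
  exact ((isCompl_iff.2 ⟨disjoint_iff.2 h1, codisjoint_iff.2 h2⟩).compl_eq).symm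

end Aux

/-- Let `A` be a finite Boole-De Morgan algebra with atoms `p 1, …, p n` and
associated involution `σ` (so `(p i)* = p (σ i)`, where `x* = (x̄)'`), and let
`u` be an element of an extension of `A` (via an embedding `f`). With
`I₁ = {i : pᵢ·u·ū = 0}`, `I₂ = {i : pᵢ·u·u* = 0}`, `I₃ = {i : pᵢ·u'·ū = 0}`,
the triple `(I₁, I₂, I₃)` is `σ`-consistent:
`σ(I₂) = I₂`, `σ(I₃) = I₃`, and `(I₁∩I₂∩I₃) ∩ σ(I₁∩I₂∩I₃) = ∅`. -/
theorem triple_sigma_consistent {A B : Type*} [BooleDeMorganAlgebra A]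
    [BooleDeMorganAlgebra B] [Fintype A]
    (f : A → B) (hinj : Function.Injective f)
    (hsup : ∀ x y : A, f (x ⊔ y) = f x ⊔ f y)
    (hinf : ∀ x y : A, f (x ⊓ y) = f x ⊓ f y)
    (hbot : f ⊥ = ⊥) (htop : f ⊤ = ⊤)
    (hcompl : ∀ x : A, f xᶜ = (f x)ᶜ)
    (hdm : ∀ x : A, f (dm x) = dm (f x))
    {n : ℕ} (p : Fin n → A)
    (hatom : ∀ i, IsAtom (p i)) (hp_inj : Function.Injective p)
    (hall : ∀ a : A, IsAtom a → ∃ i, p i = a)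
    (σ : Fin n → Fin n) (hσ2 : σ ∘ σ = id)
    (hσ : ∀ i, (dm (p i))ᶜ = p (σ i))
    (u : B) :
    let I₁ : Set (Fin n) := {i | f (p i) ⊓ (u ⊓ dm u) = ⊥}
    let I₂ : Set (Fin n) := {i | f (p i) ⊓ (u ⊓ (dm u)ᶜ) = ⊥}
    let I₃ : Set (Fin n) := {i | f (p i) ⊓ (uᶜ ⊓ dm u) = ⊥}
    σ '' I₂ = I₂ ∧ σ '' I₃ = I₃ ∧
      (I₁ ∩ I₂ ∩ I₃) ∩ σ '' (I₁ ∩ I₂ ∩ I₃) = ∅ := by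
  intro I₁ I₂ I₃
  have hσσ : ∀ i, σ (σ i) = i := fun i => congrFun hσ2 i
  have hfσ : ∀ i, f (p (σ i)) = (dm (f (p i)))ᶜ := fun i => by
    rw [← hσ i, hcompl, hdm]
  -- applying the star map b ↦ (dm b)ᶜ to an equation
  have star_eq : ∀ x y : B, x ⊓ y = ⊥ → (dm x)ᶜ ⊓ (dm y)ᶜ = ⊥ := by
    intro x y h
    have := congrArg (fun b => (dm b)ᶜ) h
    simpa [dm_inf', compl_sup, dm_bot'] using this
  -- I₂ closed under σ (one direction)
  have hI2 : ∀ i, i ∈ I₂ → σ i ∈ I₂ := by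
    intro i hi
    have h := star_eq _ _ hi
    rw [dm_inf', compl_sup, dm_compl', dm_dm, compl_compl] at h
    show f (p (σ i)) ⊓ (u ⊓ (dm u)ᶜ) = ⊥
    rw [hfσ, inf_comm u ((dm u)ᶜ)] at *
    exact h
  have hI3 : ∀ i, i ∈ I₃ → σ i ∈ I₃ := by
    intro i hi
    have h := star_eq _ _ hi
    rw [dm_inf', compl_sup, dm_compl', dm_dm, compl_compl] at h
    show f (p (σ i)) ⊓ (uᶜ ⊓ dm u) = ⊥
    rw [hfσ, inf_comm uᶜ (dm u)] at *
    exact h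
  refine ⟨?_, ?_, ?_⟩
  · ext i
    constructor
    · rintro ⟨j, hj, rfl⟩; exact hI2 j hj
    · intro hi; exact ⟨σ i, hI2 i hi, hσσ i⟩
  · ext i
    constructor
    · rintro ⟨j, hj, rfl⟩; exact hI3 j hj
    · intro hi; exact ⟨σ i, hI3 i hi, hσσ i⟩
  · -- disjointness
    have hu' : ∀ j, j ∈ I₁ → j ∈ I₂ → f (p j) ⊓ u = ⊥ := by
      intro j h1 h2
      have h1' : f (p j) ⊓ (u ⊓ dm u) = ⊥ := h1
      have h2' : f (p j) ⊓ (u ⊓ (dm u)ᶜ) = ⊥ := h2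
      have : f (p j) ⊓ (u ⊓ dm u) ⊔ f (p j) ⊓ (u ⊓ (dm u)ᶜ) = f (p j) ⊓ u := by
        rw [← inf_sup_left, ← inf_sup_left, sup_compl_eq_top, inf_top_eq]
      rw [h1', h2', sup_idem] at this
      exact this.symm
    have hdmu' : ∀ j, j ∈ I₁ → j ∈ I₃ → f (p j) ⊓ dm u = ⊥ := by
      intro j h1 h3
      have h1' : f (p j) ⊓ (u ⊓ dm u) = ⊥ := h1
      have h3' : f (p j) ⊓ (uᶜ ⊓ dm u) = ⊥ := h3
      have : f (p j) ⊓ (u ⊓ dm u) ⊔ f (p j) ⊓ (uᶜ ⊓ dm u) = f (p j) ⊓ dm u := by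
        rw [← inf_sup_left, ← inf_sup_right, sup_compl_eq_top, top_inf_eq]
      rw [h1', h3', sup_idem] at this
      exact this.symm
    rw [Set.eq_empty_iff_forall_notMem]
    rintro i ⟨hiS, j, hjS, rfl⟩
    obtain ⟨⟨hj1, hj2⟩, hj3⟩ := hjS
    obtain ⟨⟨hs1, hs2⟩, hs3⟩ := hiS
    set q := f (p j) with hq
    -- from σ j ∈ S : f (p (σ j)) ⊓ dm u = ⊥, so (dm q)ᶜ ≤ (dm u)ᶜ
    have h₁ : f (p (σ j)) ⊓ dm u = ⊥ := hdmu' (σ j) hs1 hs3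
    rw [hfσ] at h₁
    have hle : (dm q)ᶜ ≤ (dm u)ᶜ := (disjoint_iff.2 h₁).le_compl_right
    have hle2 : dm u ≤ dm q := compl_le_compl_iff_le.1 hle
    have hle3 : q ≤ u := by
      have := dm_le_dm' hle2
      rwa [dm_dm, dm_dm] at this
    -- from j ∈ S : q ⊓ u = ⊥
    have h₂ : q ⊓ u = ⊥ := hu' j hj1 hj2
    have hqbot : q = ⊥ := by
      rw [← h₂, inf_eq_left.2 hle3]
    have : p j = ⊥ := hinj (by rw [hqbot] at hq; rw [← hq, hbot])
    exact (hatom j).1 this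
end

section
/- Let A ⊆ B ⊆ D be Boole-De Morgan algebras with A, B finite, having atoms p₁,…,pₙ and q₁,…,q_m respectively, and let σ_A, σ_B be the involutions induced by * on the atoms. For subsets I₁, I₂, I₃ of {1,…,n}, define J_k = { j : q_j ≤ p_i for some i ∈ I_k }. If (I₁,I₂,I₃) is σ_A-consistent, then (J₁,J₂,J₃) is σ_B-consistent. -/
open BooleDeMorganAlgebra

/-- Let `A ⊆ B` be finite Boole-De Morgan algebras (the inclusion given by an
embedding `f`), with atoms `p 1, …, p n` and `q 1, …, q m` respectively, and let
`σA, σB` be the involutions induced by `x* = (x̄)'` on the atoms. For subsets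
`I₁, I₂, I₃` of indices define `J k = { j : q j ≤ p i for some i ∈ I k }`.
If `(I₁, I₂, I₃)` is `σA`-consistent then `(J₁, J₂, J₃)` is `σB`-consistent. -/
theorem consistent_lift {A B : Type*} [BooleDeMorganAlgebra A] [BooleDeMorganAlgebra B]
    [Fintype A] [Fintype B]
    (f : A → B) (hinj : Function.Injective f)
    (hsup : ∀ x y : A, f (x ⊔ y) = f x ⊔ f y)
    (hinf : ∀ x y : A, f (x ⊓ y) = f x ⊓ f y)
    (hbot : f ⊥ = ⊥) (htop : f ⊤ = ⊤)
    (hcompl : ∀ x : A, f xᶜ = (f x)ᶜ)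
    (hdm : ∀ x : A, f (dm x) = dm (f x))
    {n m : ℕ} (p : Fin n → A) (q : Fin m → B)
    (hpatom : ∀ i, IsAtom (p i)) (hp_inj : Function.Injective p)
    (hpall : ∀ a : A, IsAtom a → ∃ i, p i = a)
    (hqatom : ∀ j, IsAtom (q j)) (hq_inj : Function.Injective q)
    (hqall : ∀ b : B, IsAtom b → ∃ j, q j = b)
    (σA : Fin n → Fin n) (hσA2 : σA ∘ σA = id)
    (hσA : ∀ i, (dm (p i))ᶜ = p (σA i))
    (σB : Fin m → Fin m) (hσB2 : σB ∘ σB = id)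
    (hσB : ∀ j, (dm (q j))ᶜ = q (σB j))
    (I₁ I₂ I₃ : Set (Fin n))
    (hcons : σA '' I₂ = I₂ ∧ σA '' I₃ = I₃ ∧
      (I₁ ∩ I₂ ∩ I₃) ∩ σA '' (I₁ ∩ I₂ ∩ I₃) = ∅) :
    let J : Set (Fin n) → Set (Fin m) := fun I => {j | ∃ i ∈ I, q j ≤ f (p i)}
    σB '' J I₂ = J I₂ ∧ σB '' J I₃ = J I₃ ∧
      (J I₁ ∩ J I₂ ∩ J I₃) ∩ σB '' (J I₁ ∩ J I₂ ∩ J I₃) = ∅ := by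
  intro J
  -- dm is antitone on B
  have dm_anti : ∀ x y : B, x ≤ y → dm y ≤ dm x := by
    intro x y h
    have h2 : dm (x ⊔ y) = dm x ⊓ dm y := dm_sup x y
    rw [sup_eq_right.mpr h] at h2
    rw [h2]; exact inf_le_left
  have hσA2' : ∀ i, σA (σA i) = i := fun i => congrFun hσA2 i
  have hσB2' : ∀ j, σB (σB j) = j := fun j => congrFun hσB2 j
  -- key: σ commutes with the covering relation
  have key : ∀ j i, q j ≤ f (p i) → q (σB j) ≤ f (p (σA i)) := by
    intro j i h
    rw [← hσB j, ← hσA i, hcompl, compl_le_compl_iff_le, hdm]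
    exact dm_anti _ _ h
  -- uniqueness: an atom of B lies below at most one f (p i)
  have uniq : ∀ j i i', q j ≤ f (p i) → q j ≤ f (p i') → i = i' := by
    intro j i i' h h'
    by_contra hne
    have hpp : p i ⊓ p i' = ⊥ := by
      rcases (hpatom i).le_iff.mp (inf_le_left : p i ⊓ p i' ≤ p i) with h0 | h0
      · exact h0
      · exfalso
        have : p i ≤ p i' := h0 ▸ inf_le_right
        rcases (hpatom i').le_iff.mp this with h1 | h1
        · exact (hpatom i).1 h1
        · exact hne (hp_inj h1)
    have : q j ≤ ⊥ := by
      have := le_inf h h'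
      rwa [← hinf, hpp, hbot] at this
    exact (hqatom j).1 (le_bot_iff.mp this)
  -- σB '' J I = J (σA '' I)
  have himg : ∀ I : Set (Fin n), σB '' J I = J (σA '' I) := by
    intro I
    ext j
    constructor
    · rintro ⟨j', ⟨i, hi, hle⟩, rfl⟩
      exact ⟨σA i, ⟨i, hi, rfl⟩, key j' i hle⟩
    · rintro ⟨_, ⟨i, hi, rfl⟩, hle⟩
      exact ⟨σB j, ⟨σA (σA i), by rwa [hσA2'], key j (σA i) hle⟩, hσB2' j⟩
  obtain ⟨h2, h3, h123⟩ := hcons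
  refine ⟨by rw [himg, h2], by rw [himg, h3], ?_⟩
  -- intersections
  have hJinter : ∀ S T : Set (Fin n), J S ∩ J T ⊆ J (S ∩ T) := by
    rintro S T j ⟨⟨i, hi, hle⟩, ⟨i', hi', hle'⟩⟩
    exact ⟨i, ⟨hi, (uniq j i i' hle hle') ▸ hi'⟩, hle⟩
  ext j
  simp only [Set.mem_inter_iff, Set.mem_empty_iff_false, iff_false, not_and]
  rintro ⟨⟨hj1, hj2⟩, hj3⟩ hjs
  have hjS : j ∈ J (I₁ ∩ I₂ ∩ I₃) := hJinter _ _ ⟨hJinter _ _ ⟨hj1, hj2⟩, hj3⟩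
  have hjS' : j ∈ J (σA '' (I₁ ∩ I₂ ∩ I₃)) := by
    rw [← himg]
    rcases hjs with ⟨j', ⟨⟨hj1', hj2'⟩, hj3'⟩, rfl⟩
    exact ⟨j', hJinter _ _ ⟨hJinter _ _ ⟨hj1', hj2'⟩, hj3'⟩, rfl⟩
  obtain ⟨i, hi, hle⟩ := hjS
  obtain ⟨i', hi', hle'⟩ := hjS'
  have : i ∈ (I₁ ∩ I₂ ∩ I₃) ∩ σA '' (I₁ ∩ I₂ ∩ I₃) :=
    ⟨hi, (uniq j i i' hle hle') ▸ hi'⟩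
  rw [h123] at this
  exact this
end
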